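/- Under (H1) with 0<a<1/d, if λ(S_−)=0 (where S_−={x∈ℝ^d : K(x)<0} and λ is Lebesgue measure), then: I(t)=+∞ for all t<0; I(0)=λ(S_+)/(1−ad) where S_+={x∈ℝ^d : K(x)>0}; I is strictly convex on (0,+∞) and continuous on (0,+∞); and for every t>0, I(t) = t·(ψ')^{-1}(t) − ψ((ψ')^{-1}(t)). -/

import Mathlib

open MeasureTheory Filter Set
open scoped Topology ENNReal NNReal BigOperators

/-- `ψ(u) = ∫_{[0,1]×ℝ^d} s^{-ad} (exp(s^{ad} u K(z)/(1-ad)) - 1) ds dz`. -/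
noncomputable def psi (d : ℕ) (a : ℝ) (K : (Fin d → ℝ) → ℝ) (u : ℝ) : ℝ :=
  ∫ s in Ioc (0:ℝ) 1, ∫ z : Fin d → ℝ,
    s ^ (-(a * d)) * (Real.exp (s ^ (a * d) * u * K z / (1 - a * d)) - 1)

/-- The Fenchel–Legendre transform `I(t) = sup_u (u t - ψ(u))`, as an extended real. -/
noncomputable def Itrans (d : ℕ) (a : ℝ) (K : (Fin d → ℝ) → ℝ) (t : ℝ) : EReal :=
  ⨆ u : ℝ, ((u * t - psi d a K u : ℝ) : EReal)

/-!
Write `b = a d` and `θ = s^b K(z) / (1 - b)`. Differentiating under the integral,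
`ψ'(u) = ∫ s^{-b} θ e^{uθ}`, and the tangent-line bound `e^y ≥ e^x (1 + y - x)` gives
`ψ'(v) - ψ'(u) ≥ (v - u) ∫ s^{-b} θ² e^{uθ}`, where the last integral is positive since
`λ(S₊) > 0`. So `ψ'` is strictly increasing and unbounded above; by dominated convergence it
tends to `0` at `-∞`, so by Darboux's theorem it maps onto `(0, ∞)`. For `t > 0` the supremum
defining `I(t)` is therefore attained exactly at the `u` with `ψ'(u) = t`, which gives the formula
and strict convexity. For `t < 0` the supremum is infinite because `ψ ≤ 0` on `(-∞, 0]`, and at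
`t = 0`, `-ψ(u)` increases as `u → -∞` to `∫ s^{-b} 1_{K > 0} = λ(S₊) / (1 - b)` by monotone
convergence.
-/

noncomputable def legendre (f : ℝ → ℝ) (t : ℝ) : EReal :=
  ⨆ u : ℝ, ((u * t - f u : ℝ) : EReal)

section Legendre

variable {f f' : ℝ → ℝ} {t u u₀ : ℝ}

lemma le_legendre (f : ℝ → ℝ) (t u : ℝ) : ((u * t - f u : ℝ) : EReal) ≤ legendre f t :=
  le_iSup (fun u => ((u * t - f u : ℝ) : EReal)) u

lemma legendre_eq_top_of_neg (hf : ∀ u ≤ 0, f u ≤ 0) (ht : t < 0) : legendre f t = ⊤ := by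
  refine (EReal.eq_top_iff_forall_lt _).2 fun r => ?_
  have hu : (|r| + 1) / t ≤ 0 := div_nonpos_of_nonneg_of_nonpos (by positivity) ht.le
  refine lt_of_lt_of_le ?_ (le_legendre f t ((|r| + 1) / t))
  rw [EReal.coe_lt_coe_iff, div_mul_cancel₀ _ ht.ne]
  linarith [le_abs_self r, hf _ hu]

lemma sub_lt_of_deriv_eq (hf : ∀ u, HasDerivAt f (f' u) u) (hf' : StrictMono f')
    (hu₀ : f' u₀ = t) (hu : u ≠ u₀) : u * t - f u < u₀ * t - f u₀ := by
  have hderiv : deriv f = f' := funext fun u => (hf u).deriv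
  have hconv : StrictConvexOn ℝ univ f :=
    (hderiv ▸ hf').strictConvexOn_univ_of_deriv
      (continuous_iff_continuousAt.2 fun u => (hf u).continuousAt)
  rcases hu.lt_or_gt with h | h
  · have := hconv.slope_lt_of_hasDerivAt trivial trivial h (hf u₀)
    rw [hu₀, slope_def_field, div_lt_iff₀ (sub_pos.2 h)] at this
    linarith
  · have := hconv.lt_slope_of_hasDerivAt trivial trivial h (hf u₀)
    rw [hu₀, slope_def_field, lt_div_iff₀ (sub_pos.2 h)] at this
    linarith

lemma legendre_eq_of_deriv_eq (hf : ∀ u, HasDerivAt f (f' u) u) (hf' : StrictMono f')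
    (hu₀ : f' u₀ = t) : legendre f t = ((u₀ * t - f u₀ : ℝ) : EReal) := by
  refine le_antisymm (iSup_le fun u => ?_) (le_legendre f t u₀)
  rcases eq_or_ne u u₀ with rfl | hu
  · exact le_rfl
  · exact EReal.coe_le_coe_iff.2 (sub_lt_of_deriv_eq hf hf' hu₀ hu).le

lemma strictConvexOn_legendre (hf : ∀ u, HasDerivAt f (f' u) u) (hf' : StrictMono f')
    {s : Set ℝ} (hs : Convex ℝ s) (hsurj : s ⊆ range f') :
    StrictConvexOn ℝ s fun t => (legendre f t).toReal := by
  refine ⟨hs, fun x hx y hy hxy p q hp hq hpq => ?_⟩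
  obtain ⟨ux, hux⟩ := hsurj hx
  obtain ⟨uy, huy⟩ := hsurj hy
  obtain ⟨um, hum⟩ := hsurj (hs hx hy hp.le hq.le hpq)
  simp only [smul_eq_mul] at hum ⊢
  simp only [legendre_eq_of_deriv_eq hf hf' hux, legendre_eq_of_deriv_eq hf hf' huy,
    legendre_eq_of_deriv_eq hf hf' hum, EReal.toReal_coe]
  have hmx : um ≠ ux := by
    rintro rfl
    refine hxy (mul_left_cancel₀ hq.ne' ?_)
    linear_combination hum - hux + x * hpq
  have hmy : um ≠ uy := by
    rintro rfl
    refine hxy (mul_left_cancel₀ hp.ne' ?_)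
    linear_combination huy - hum - y * hpq
  have hx' := mul_lt_mul_of_pos_left (sub_lt_of_deriv_eq hf hf' hux hmx) hp
  have hy' := mul_lt_mul_of_pos_left (sub_lt_of_deriv_eq hf hf' huy hmy) hq
  linear_combination hx' + hy' + f um * hpq

end Legendre

lemma abs_exp_sub_one_le_mul_exp_abs (x : ℝ) : |Real.exp x - 1| ≤ |x| * Real.exp |x| := by
  rcases le_or_gt 0 x with hx | hx
  · rw [abs_of_nonneg hx, abs_of_nonneg (by linarith [Real.one_le_exp hx])]
    have := mul_le_mul_of_nonneg_right (Real.add_one_le_exp (-x)) (Real.exp_pos x).le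
    rw [← Real.exp_add, neg_add_cancel, Real.exp_zero] at this
    linarith
  · rw [abs_of_neg hx, abs_of_nonpos (by linarith [Real.exp_lt_one_iff.2 hx])]
    nlinarith [Real.add_one_le_exp x, Real.one_le_exp (neg_nonneg.2 hx.le)]

section Psi

variable {Z : Type*} {b M u v : ℝ} {K : Z → ℝ} {p : ℝ × Z}

noncomputable def rate (b : ℝ) (K : Z → ℝ) (p : ℝ × Z) : ℝ := p.1 ^ b * K p.2 / (1 - b)

lemma rate_nonneg (hb₁ : b < 1) (hK₀ : ∀ z, 0 ≤ K z) (hp : 0 ≤ p.1) : 0 ≤ rate b K p :=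
  div_nonneg (mul_nonneg (Real.rpow_nonneg hp b) (hK₀ p.2)) (sub_nonneg.2 hb₁.le)

lemma rate_pos (hb₁ : b < 1) (hp : 0 < p.1) (hKp : 0 < K p.2) : 0 < rate b K p :=
  div_pos (mul_pos (Real.rpow_pos_of_pos hp b) hKp) (sub_pos.2 hb₁)

lemma rate_le (hb₀ : 0 ≤ b) (hb₁ : b < 1) (hK₀ : ∀ z, 0 ≤ K z) (hKM : ∀ z, K z ≤ M)
    (hp : p.1 ∈ Ioc 0 1) : rate b K p ≤ M / (1 - b) := by
  refine div_le_div_of_nonneg_right ?_ (sub_nonneg.2 hb₁.le)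
  exact (mul_le_of_le_one_left (hK₀ p.2) (Real.rpow_le_one hp.1.le hp.2 hb₀)).trans (hKM p.2)

lemma rpow_neg_mul_rate (hp : 0 < p.1) : p.1 ^ (-b) * rate b K p = K p.2 / (1 - b) := by
  rw [rate, ← mul_div_assoc, ← mul_assoc, ← Real.rpow_add hp, neg_add_cancel, Real.rpow_zero,
    one_mul]

lemma exp_mul_rate_le (hb₀ : 0 ≤ b) (hb₁ : b < 1) (hK₀ : ∀ z, 0 ≤ K z) (hKM : ∀ z, K z ≤ M)
    {R : ℝ} (hR : 0 ≤ R) (hu : u ≤ R) (hp : p.1 ∈ Ioc 0 1) :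
    Real.exp (u * rate b K p) ≤ Real.exp (R * (M / (1 - b))) := by
  have h0 := rate_nonneg hb₁ hK₀ hp.1.le
  exact Real.exp_le_exp.2 ((mul_le_mul_of_nonneg_right hu h0).trans
    (mul_le_mul_of_nonneg_left (rate_le hb₀ hb₁ hK₀ hKM hp) hR))

lemma abs_rpow_neg_mul_rate_mul_le (hb₁ : b < 1) (hK₀ : ∀ z, 0 ≤ K z) (hp : 0 < p.1)
    {x C : ℝ} (hx : |x| ≤ C) : |p.1 ^ (-b) * rate b K p * x| ≤ C / (1 - b) * K p.2 := by
  rw [rpow_neg_mul_rate hp, abs_mul, abs_of_nonneg (div_nonneg (hK₀ _) (sub_nonneg.2 hb₁.le))]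
  calc K p.2 / (1 - b) * |x| ≤ K p.2 / (1 - b) * C :=
        mul_le_mul_of_nonneg_left hx (div_nonneg (hK₀ _) (sub_nonneg.2 hb₁.le))
    _ = C / (1 - b) * K p.2 := by ring

noncomputable def psiIntegrand (b : ℝ) (K : Z → ℝ) (u : ℝ) (p : ℝ × Z) : ℝ :=
  p.1 ^ (-b) * (Real.exp (u * rate b K p) - 1)

lemma psiIntegrand_zero : psiIntegrand b K 0 p = 0 := by simp [psiIntegrand]

lemma psiIntegrand_mono (hb₁ : b < 1) (hK₀ : ∀ z, 0 ≤ K z) (hp : 0 ≤ p.1) :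
    Monotone fun u => psiIntegrand b K u p := fun _ _ huv =>
  mul_le_mul_of_nonneg_left (sub_le_sub_right (Real.exp_le_exp.2
    (mul_le_mul_of_nonneg_right huv (rate_nonneg hb₁ hK₀ hp))) 1) (Real.rpow_nonneg hp _)

lemma hasDerivAt_psiIntegrand (u : ℝ) :
    HasDerivAt (fun u => psiIntegrand b K u p)
      (p.1 ^ (-b) * rate b K p * Real.exp (u * rate b K p)) u := by
  rw [show p.1 ^ (-b) * rate b K p * Real.exp (u * rate b K p)
      = p.1 ^ (-b) * (Real.exp (u * rate b K p) * rate b K p) by ring]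
  exact (((hasDerivAt_mul_const (rate b K p)).exp).sub_const 1).const_mul (p.1 ^ (-b))

lemma ofReal_neg_psiIntegrand_le (hK₀ : ∀ z, 0 ≤ K z) (hp : 0 < p.1) :
    ENNReal.ofReal (-psiIntegrand b K u p)
      ≤ ENNReal.ofReal (p.1 ^ (-b)) * {z | 0 < K z}.indicator 1 p.2 := by
  by_cases hKp : 0 < K p.2
  · rw [indicator_of_mem (show p.2 ∈ {z | 0 < K z} from hKp), Pi.one_apply, mul_one, psiIntegrand]
    refine ENNReal.ofReal_le_ofReal ?_
    nlinarith [Real.exp_pos (u * rate b K p), Real.rpow_nonneg hp.le (-b)]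
  · have hθ : rate b K p = 0 := by
      rw [rate, le_antisymm (not_lt.1 hKp) (hK₀ p.2), mul_zero, zero_div]
    simp [psiIntegrand, hθ]

lemma tendsto_ofReal_neg_psiIntegrand (hb₁ : b < 1) (hK₀ : ∀ z, 0 ≤ K z) (hp : 0 < p.1) :
    Tendsto (fun n : ℕ => ENNReal.ofReal (-psiIntegrand b K (-n) p)) atTop
      (𝓝 (ENNReal.ofReal (p.1 ^ (-b)) * {z | 0 < K z}.indicator 1 p.2)) := by
  by_cases hKp : 0 < K p.2
  · rw [indicator_of_mem (show p.2 ∈ {z | 0 < K z} from hKp), Pi.one_apply, mul_one]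
    refine ENNReal.tendsto_ofReal ?_
    have hexp : Tendsto (fun n : ℕ => Real.exp (-n * rate b K p)) atTop (𝓝 0) :=
      Real.tendsto_exp_atBot.comp ((tendsto_neg_atTop_atBot.comp
        tendsto_natCast_atTop_atTop).atBot_mul_const (rate_pos hb₁ hp hKp))
    simpa [psiIntegrand, mul_sub] using (hexp.const_mul (p.1 ^ (-b))).const_sub (p.1 ^ (-b))
  · have hθ : rate b K p = 0 := by
      rw [rate, le_antisymm (not_lt.1 hKp) (hK₀ p.2), mul_zero, zero_div]
    simp [psiIntegrand, hθ, hKp]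

variable [MeasurableSpace Z] {ν : Measure Z}

noncomputable def unitProd (ν : Measure Z) : Measure (ℝ × Z) :=
  (volume.restrict (Ioc 0 1)).prod ν

noncomputable def Psi (ν : Measure Z) (b : ℝ) (K : Z → ℝ) (u : ℝ) : ℝ :=
  ∫ p, psiIntegrand b K u p ∂unitProd ν

noncomputable def dPsi (ν : Measure Z) (b : ℝ) (K : Z → ℝ) (u : ℝ) : ℝ :=
  ∫ p, p.1 ^ (-b) * rate b K p * Real.exp (u * rate b K p) ∂unitProd ν

noncomputable def d2Psi (ν : Measure Z) (b : ℝ) (K : Z → ℝ) (u : ℝ) : ℝ :=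
  ∫ p, p.1 ^ (-b) * rate b K p ^ 2 * Real.exp (u * rate b K p) ∂unitProd ν

structure IsBoundedNonnegIntegrable (ν : Measure Z) (M : ℝ) (K : Z → ℝ) : Prop where
  measurable : Measurable K
  nonneg : ∀ z, 0 ≤ K z
  le_bound : ∀ z, K z ≤ M
  integrable : Integrable K ν

lemma ae_mem_Ioc_fst : ∀ᵐ p ∂unitProd ν, p.1 ∈ Ioc (0 : ℝ) 1 :=
  Measure.quasiMeasurePreserving_fst.ae (ae_restrict_mem measurableSet_Ioc)

lemma Psi_zero : Psi ν b K 0 = 0 := by simp [Psi, psiIntegrand_zero]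

variable [SFinite ν]

lemma integrable_of_abs_le_mul (hKi : Integrable K ν) {g : ℝ × Z → ℝ}
    (hg : AEStronglyMeasurable g (unitProd ν)) (C : ℝ)
    (hgK : ∀ p : ℝ × Z, p.1 ∈ Ioc 0 1 → |g p| ≤ C * K p.2) : Integrable g (unitProd ν) :=
  ((hKi.comp_snd _).const_mul C).mono' hg (ae_mem_Ioc_fst.mono hgK)

lemma integrable_psiIntegrand (hb₀ : 0 ≤ b) (hb₁ : b < 1) (hK : IsBoundedNonnegIntegrable ν M K)
    (u : ℝ) : Integrable (psiIntegrand b K u) (unitProd ν) := by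
  have := hK.measurable
  refine integrable_of_abs_le_mul hK.integrable (by unfold psiIntegrand rate; fun_prop)
    (|u| * Real.exp (|u| * (M / (1 - b))) / (1 - b)) fun p hp => ?_
  have hθ := rate_nonneg hb₁ hK.nonneg hp.1.le
  calc |psiIntegrand b K u p|
      ≤ p.1 ^ (-b) * (|u * rate b K p| * Real.exp |u * rate b K p|) := by
        rw [psiIntegrand, abs_mul, abs_of_nonneg (Real.rpow_nonneg hp.1.le _)]
        exact mul_le_mul_of_nonneg_left (abs_exp_sub_one_le_mul_exp_abs _)
          (Real.rpow_nonneg hp.1.le _)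
    _ = |u| * Real.exp (|u| * rate b K p) * (p.1 ^ (-b) * rate b K p) := by
        rw [abs_mul, abs_of_nonneg hθ]; ring
    _ ≤ |u| * Real.exp (|u| * (M / (1 - b))) * (K p.2 / (1 - b)) := by
        rw [rpow_neg_mul_rate hp.1]
        gcongr
        · exact div_nonneg (hK.nonneg _) (sub_nonneg.2 hb₁.le)
        · exact rate_le hb₀ hb₁ hK.nonneg hK.le_bound hp
    _ = _ := by ring

theorem hasDerivAt_Psi (hb₀ : 0 ≤ b) (hb₁ : b < 1) (hK : IsBoundedNonnegIntegrable ν M K)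
    (u₀ : ℝ) : HasDerivAt (Psi ν b K) (dPsi ν b K u₀) u₀ := by
  have := hK.measurable
  have hR : 0 ≤ |u₀| + 1 := by positivity
  refine (hasDerivAt_integral_of_dominated_loc_of_deriv_le
    (Iio_mem_nhds ((le_abs_self u₀).trans_lt (lt_add_one _)))
    (Eventually.of_forall fun u => (integrable_psiIntegrand hb₀ hb₁ hK u).aestronglyMeasurable)
    (integrable_psiIntegrand hb₀ hb₁ hK u₀) (by unfold rate; fun_prop)
    (bound := fun p => Real.exp ((|u₀| + 1) * (M / (1 - b))) / (1 - b) * K p.2) ?_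
    ((hK.integrable.comp_snd _).const_mul _)
    (Eventually.of_forall fun p x _ => hasDerivAt_psiIntegrand x)).2
  filter_upwards [ae_mem_Ioc_fst] with p hp x hx
  refine abs_rpow_neg_mul_rate_mul_le hb₁ hK.nonneg hp.1 ?_
  rw [abs_of_pos (Real.exp_pos _)]
  exact exp_mul_rate_le hb₀ hb₁ hK.nonneg hK.le_bound hR (le_of_lt hx) hp

lemma integrable_dPsi_integrand (hb₀ : 0 ≤ b) (hb₁ : b < 1)
    (hK : IsBoundedNonnegIntegrable ν M K) (u : ℝ) :
    Integrable (fun p => p.1 ^ (-b) * rate b K p * Real.exp (u * rate b K p)) (unitProd ν) := by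
  have := hK.measurable
  refine integrable_of_abs_le_mul hK.integrable (by unfold rate; fun_prop)
    (Real.exp (|u| * (M / (1 - b))) / (1 - b)) fun p hp =>
    abs_rpow_neg_mul_rate_mul_le hb₁ hK.nonneg hp.1 ?_
  rw [abs_of_pos (Real.exp_pos _)]
  exact exp_mul_rate_le hb₀ hb₁ hK.nonneg hK.le_bound (abs_nonneg u) (le_abs_self u) hp

lemma integrable_d2Psi_integrand (hb₀ : 0 ≤ b) (hb₁ : b < 1)
    (hK : IsBoundedNonnegIntegrable ν M K) (u : ℝ) :
    Integrable (fun p => p.1 ^ (-b) * rate b K p ^ 2 * Real.exp (u * rate b K p))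
      (unitProd ν) := by
  have := hK.measurable
  refine integrable_of_abs_le_mul hK.integrable (by unfold rate; fun_prop)
    (M / (1 - b) * Real.exp (|u| * (M / (1 - b))) / (1 - b)) fun p hp => ?_
  rw [show p.1 ^ (-b) * rate b K p ^ 2 * Real.exp (u * rate b K p)
      = p.1 ^ (-b) * rate b K p * (rate b K p * Real.exp (u * rate b K p)) by ring]
  refine abs_rpow_neg_mul_rate_mul_le hb₁ hK.nonneg hp.1 ?_
  rw [abs_of_nonneg (mul_nonneg (rate_nonneg hb₁ hK.nonneg hp.1.le) (Real.exp_pos _).le)]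
  exact mul_le_mul (rate_le hb₀ hb₁ hK.nonneg hK.le_bound hp)
    (exp_mul_rate_le hb₀ hb₁ hK.nonneg hK.le_bound (abs_nonneg u) (le_abs_self u) hp)
    (Real.exp_pos _).le ((rate_nonneg hb₁ hK.nonneg hp.1.le).trans
      (rate_le hb₀ hb₁ hK.nonneg hK.le_bound hp))

lemma monotone_Psi (hb₀ : 0 ≤ b) (hb₁ : b < 1) (hK : IsBoundedNonnegIntegrable ν M K) :
    Monotone (Psi ν b K) := fun u v huv =>
  integral_mono_ae (integrable_psiIntegrand hb₀ hb₁ hK u) (integrable_psiIntegrand hb₀ hb₁ hK v)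
    (ae_mem_Ioc_fst.mono fun _ hp => psiIntegrand_mono hb₁ hK.nonneg hp.1.le huv)

lemma mul_d2Psi_le_dPsi_sub (hb₀ : 0 ≤ b) (hb₁ : b < 1) (hK : IsBoundedNonnegIntegrable ν M K)
    (u v : ℝ) : (v - u) * d2Psi ν b K u ≤ dPsi ν b K v - dPsi ν b K u := by
  rw [d2Psi, dPsi, dPsi, ← integral_const_mul, ← integral_sub
    (integrable_dPsi_integrand hb₀ hb₁ hK v) (integrable_dPsi_integrand hb₀ hb₁ hK u)]
  refine integral_mono_ae ((integrable_d2Psi_integrand hb₀ hb₁ hK u).const_mul _)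
    ((integrable_dPsi_integrand hb₀ hb₁ hK v).sub (integrable_dPsi_integrand hb₀ hb₁ hK u))
    (ae_mem_Ioc_fst.mono fun p hp => ?_)
  set θ := rate b K p
  have hw : 0 ≤ p.1 ^ (-b) * θ * Real.exp (u * θ) :=
    mul_nonneg (mul_nonneg (Real.rpow_nonneg hp.1.le _) (rate_nonneg hb₁ hK.nonneg hp.1.le))
      (Real.exp_pos _).le
  calc (v - u) * (p.1 ^ (-b) * θ ^ 2 * Real.exp (u * θ))
      = p.1 ^ (-b) * θ * Real.exp (u * θ) * ((v - u) * θ + 1)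
        - p.1 ^ (-b) * θ * Real.exp (u * θ) := by ring
    _ ≤ p.1 ^ (-b) * θ * Real.exp (u * θ) * Real.exp ((v - u) * θ)
        - p.1 ^ (-b) * θ * Real.exp (u * θ) := by
        gcongr; exact Real.add_one_le_exp _
    _ = p.1 ^ (-b) * θ * Real.exp (v * θ) - p.1 ^ (-b) * θ * Real.exp (u * θ) := by
        rw [mul_assoc _ (Real.exp _), ← Real.exp_add]; ring_nf

lemma d2Psi_pos (hb₀ : 0 ≤ b) (hb₁ : b < 1) (hK : IsBoundedNonnegIntegrable ν M K)
    (hpos : ν {z | 0 < K z} ≠ 0) (u : ℝ) : 0 < d2Psi ν b K u := by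
  refine (integral_pos_iff_support_of_nonneg_ae (ae_mem_Ioc_fst.mono fun p hp => ?_)
    (integrable_d2Psi_integrand hb₀ hb₁ hK u)).2 ?_
  · exact mul_nonneg (mul_nonneg (Real.rpow_nonneg hp.1.le _) (sq_nonneg _)) (Real.exp_pos _).le
  · have hsub : Ioc 0 1 ×ˢ {z | 0 < K z} ⊆ Function.support
        fun p : ℝ × Z => p.1 ^ (-b) * rate b K p ^ 2 * Real.exp (u * rate b K p) :=
      fun p ⟨hp, hKp⟩ => (mul_pos (mul_pos (Real.rpow_pos_of_pos hp.1 _)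
        (pow_pos (rate_pos hb₁ hp.1 hKp) 2)) (Real.exp_pos _)).ne'
    refine lt_of_lt_of_le ?_ (measure_mono hsub)
    rw [unitProd, Measure.prod_prod, Measure.restrict_apply measurableSet_Ioc, inter_self,
      Real.volume_Ioc, sub_zero, ENNReal.ofReal_one, one_mul]
    exact pos_iff_ne_zero.2 hpos

lemma strictMono_dPsi (hb₀ : 0 ≤ b) (hb₁ : b < 1) (hK : IsBoundedNonnegIntegrable ν M K)
    (hpos : ν {z | 0 < K z} ≠ 0) : StrictMono (dPsi ν b K) := fun u v huv => by
  have := mul_pos (sub_pos.2 huv) (d2Psi_pos hb₀ hb₁ hK hpos u)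
  linarith [mul_d2Psi_le_dPsi_sub hb₀ hb₁ hK u v]

lemma tendsto_dPsi_atTop (hb₀ : 0 ≤ b) (hb₁ : b < 1) (hK : IsBoundedNonnegIntegrable ν M K)
    (hpos : ν {z | 0 < K z} ≠ 0) : Tendsto (dPsi ν b K) atTop atTop :=
  tendsto_atTop_mono
    (fun u => by simp only [id]; linarith [mul_d2Psi_le_dPsi_sub hb₀ hb₁ hK 0 u])
    (tendsto_atTop_add_const_left _ (dPsi ν b K 0)
      (tendsto_id.atTop_mul_const (d2Psi_pos hb₀ hb₁ hK hpos 0)))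

lemma tendsto_dPsi_atBot (hb₁ : b < 1) (hK : IsBoundedNonnegIntegrable ν M K) :
    Tendsto (dPsi ν b K) atBot (𝓝 0) := by
  have := hK.measurable
  have h := tendsto_integral_filter_of_dominated_convergence (μ := unitProd ν) (l := atBot)
    (F := fun u p => p.1 ^ (-b) * rate b K p * Real.exp (u * rate b K p))
    (f := fun _ => 0) (bound := fun p => 1 / (1 - b) * K p.2)
    (Eventually.of_forall fun u => by unfold rate; fun_prop) ?_
    ((hK.integrable.comp_snd _).const_mul _) ?_
  · rwa [integral_zero] at h
  · filter_upwards [eventually_le_atBot 0] with u hu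
    filter_upwards [ae_mem_Ioc_fst] with p hp
    refine abs_rpow_neg_mul_rate_mul_le hb₁ hK.nonneg hp.1 ?_
    rw [abs_of_pos (Real.exp_pos _), Real.exp_le_one_iff]
    exact mul_nonpos_of_nonpos_of_nonneg hu (rate_nonneg hb₁ hK.nonneg hp.1.le)
  · filter_upwards [ae_mem_Ioc_fst] with p hp
    rcases (rate_nonneg hb₁ hK.nonneg hp.1.le).eq_or_lt with h0 | h0
    · simp [← h0]
    · simpa using ((Real.tendsto_exp_atBot.comp (tendsto_id.atBot_mul_const h0)).const_mul
        (p.1 ^ (-b) * rate b K p))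

lemma exists_dPsi_eq (hb₀ : 0 ≤ b) (hb₁ : b < 1) (hK : IsBoundedNonnegIntegrable ν M K)
    (hpos : ν {z | 0 < K z} ≠ 0) {t : ℝ} (ht : 0 < t) : ∃ u, dPsi ν b K u = t := by
  obtain ⟨u₁, hu₁⟩ := ((tendsto_dPsi_atBot hb₁ hK).eventually_lt_const ht).exists
  obtain ⟨u₂, hu₂, h₁₂⟩ := (((tendsto_dPsi_atTop hb₀ hb₁ hK hpos).eventually_gt_atTop t).and
    (eventually_ge_atTop u₁)).exists
  -- Darboux's theorem: no continuity of `dPsi` is needed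
  obtain ⟨u, -, hu⟩ := exists_hasDerivWithinAt_eq_of_gt_of_lt h₁₂
    (fun x _ => (hasDerivAt_Psi hb₀ hb₁ hK x).hasDerivWithinAt) hu₁ hu₂
  exact ⟨u, hu⟩

lemma setIntegral_Ioc_rpow_neg (hb₁ : b < 1) : ∫ s in Ioc (0 : ℝ) 1, s ^ (-b) = (1 - b)⁻¹ := by
  rw [← intervalIntegral.integral_of_le zero_le_one, integral_rpow (Or.inl (by linarith)),
    Real.one_rpow, Real.zero_rpow (by linarith), sub_zero, neg_add_eq_sub, one_div]

lemma lintegral_rpow_neg_mul_indicator (hb₁ : b < 1) (hKm : Measurable K) :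
    ∫⁻ p, ENNReal.ofReal (p.1 ^ (-b)) * {z | 0 < K z}.indicator 1 p.2 ∂unitProd ν
      = ENNReal.ofReal (1 - b)⁻¹ * ν {z | 0 < K z} := by
  have hS : MeasurableSet {z | 0 < K z} := measurableSet_lt measurable_const hKm
  refine (lintegral_prod_mul (f := fun s : ℝ => ENNReal.ofReal (s ^ (-b)))
    (g := {z | 0 < K z}.indicator 1) (by fun_prop)
    (measurable_one.indicator hS).aemeasurable).trans ?_
  rw [lintegral_indicator_one hS, ← setIntegral_Ioc_rpow_neg hb₁,
    ofReal_integral_eq_lintegral_ofReal]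
  · exact (intervalIntegrable_iff_integrableOn_Ioc_of_le zero_le_one).1
      (intervalIntegral.intervalIntegrable_rpow' (by linarith))
  · filter_upwards [ae_restrict_mem measurableSet_Ioc] with s hs
    exact Real.rpow_nonneg hs.1.le _

lemma ofReal_neg_Psi (hb₀ : 0 ≤ b) (hb₁ : b < 1) (hK : IsBoundedNonnegIntegrable ν M K)
    (hu : u ≤ 0) :
    ENNReal.ofReal (-Psi ν b K u) = ∫⁻ p, ENNReal.ofReal (-psiIntegrand b K u p) ∂unitProd ν := by
  rw [Psi, ← integral_neg]
  refine ofReal_integral_eq_lintegral_ofReal (integrable_psiIntegrand hb₀ hb₁ hK u).neg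
    (ae_mem_Ioc_fst.mono fun p hp => ?_)
  exact neg_nonneg.2 ((psiIntegrand_mono hb₁ hK.nonneg hp.1.le hu).trans_eq psiIntegrand_zero)

theorem legendre_Psi_zero (hb₀ : 0 ≤ b) (hb₁ : b < 1) (hK : IsBoundedNonnegIntegrable ν M K) :
    legendre (Psi ν b K) 0 = (((1 - b)⁻¹ : ℝ) : EReal) * (ν {z | 0 < K z} : EReal) := by
  set G : ℝ × Z → ℝ≥0∞ := fun p => ENNReal.ofReal (p.1 ^ (-b)) * {z | 0 < K z}.indicator 1 p.2
  have hG : ((∫⁻ p, G p ∂unitProd ν : ℝ≥0∞) : EReal)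
      = (((1 - b)⁻¹ : ℝ) : EReal) * (ν {z | 0 < K z} : EReal) := by
    rw [lintegral_rpow_neg_mul_indicator hb₁ hK.measurable, EReal.coe_ennreal_mul,
      EReal.coe_ennreal_ofReal, max_eq_left (inv_nonneg.2 (sub_nonneg.2 hb₁.le))]
  rw [← hG]
  refine le_antisymm (iSup_le fun u => ?_) ?_
  · have hu : min u 0 ≤ 0 := min_le_right u 0
    calc ((u * 0 - Psi ν b K u : ℝ) : EReal) ≤ ((-Psi ν b K (min u 0) : ℝ) : EReal) := by
          rw [EReal.coe_le_coe_iff]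
          linarith [monotone_Psi hb₀ hb₁ hK (min_le_left u 0)]
      _ ≤ (ENNReal.ofReal (-Psi ν b K (min u 0)) : EReal) := by
          rw [EReal.coe_ennreal_ofReal]; exact EReal.coe_le_coe_iff.2 (le_max_left _ _)
      _ ≤ _ := by
          rw [ofReal_neg_Psi hb₀ hb₁ hK hu, EReal.coe_ennreal_le_coe_ennreal_iff]
          exact lintegral_mono_ae (ae_mem_Ioc_fst.mono fun p hp =>
            ofReal_neg_psiIntegrand_le hK.nonneg hp.1)
  · have h := lintegral_tendsto_of_tendsto_of_monotone (μ := unitProd ν) (F := G)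
      (f := fun (n : ℕ) p => ENNReal.ofReal (-psiIntegrand b K (-n) p))
      (fun n => by have := hK.measurable; unfold psiIntegrand rate; fun_prop)
      (ae_mem_Ioc_fst.mono fun p hp m n hmn => ENNReal.ofReal_le_ofReal (neg_le_neg
        (psiIntegrand_mono hb₁ hK.nonneg hp.1.le (neg_le_neg (Nat.cast_le.2 hmn)))))
      (ae_mem_Ioc_fst.mono fun p hp => tendsto_ofReal_neg_psiIntegrand hb₁ hK.nonneg hp.1)
    refine le_of_tendsto' ((continuous_coe_ennreal_ereal.tendsto _).comp h) fun n => ?_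
    rw [Function.comp_apply, ← ofReal_neg_Psi hb₀ hb₁ hK (by simp), EReal.coe_ennreal_ofReal]
    rcases max_choice (-Psi ν b K (-n)) 0 with h | h <;> rw [h]
    · simpa using le_legendre (Psi ν b K) 0 (-n)
    · simpa [Psi_zero] using le_legendre (Psi ν b K) 0 0

end Psi

lemma exists_isBoundedNonnegIntegrable_ae_eq {Z : Type*} [MeasurableSpace Z] {ν : Measure Z}
    {M : ℝ} {K : Z → ℝ} (hKi : Integrable K ν) (hM : ∀ z, |K z| ≤ M)
    (hK₀ : ∀ᵐ z ∂ν, 0 ≤ K z) : ∃ K', IsBoundedNonnegIntegrable ν M K' ∧ K =ᵐ[ν] K' := by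
  set K' := fun z => max 0 (min M (hKi.1.mk K z))
  have hKK' : K =ᵐ[ν] K' := by
    filter_upwards [hKi.1.ae_eq_mk, hK₀] with z hz hz₀
    simp only [K', ← hz, min_eq_right (le_of_abs_le (hM z)), max_eq_right hz₀]
  refine ⟨K', ⟨?_, fun z => le_max_left _ _, fun z => ?_, hKi.congr hKK'⟩, hKK'⟩
  · exact measurable_const.max (measurable_const.min hKi.1.stronglyMeasurable_mk.measurable)
  · exact max_le ((abs_nonneg _).trans (hM z)) (min_le_left _ _)

lemma measure_setOf_pos_ne_zero {Z : Type*} [MeasurableSpace Z] {ν : Measure Z} {K : Z → ℝ}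
    (hK₀ : ∀ z, 0 ≤ K z) (h : ∫ z, K z ∂ν ≠ 0) : ν {z | 0 < K z} ≠ 0 := by
  contrapose! h
  refine integral_eq_zero_of_ae ?_
  filter_upwards [measure_eq_zero_iff_ae_notMem.1 h] with z hz
  exact le_antisymm (not_lt.1 hz) (hK₀ z)

section Kernel

variable {d : ℕ} {a M : ℝ} {K K' : (Fin d → ℝ) → ℝ}

lemma psi_congr_ae (h : K =ᵐ[volume] K') : psi d a K = psi d a K' := by
  funext u
  refine integral_congr_ae (Eventually.of_forall fun s =>
    integral_congr_ae (h.mono fun z hz => ?_))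
  simp only [hz]

lemma psi_eq_Psi (hb₀ : 0 ≤ a * d) (hb₁ : a * d < 1) (hK : IsBoundedNonnegIntegrable volume M K) :
    psi d a K = Psi volume (a * d) K := by
  funext u
  rw [Psi, unitProd, integral_prod _ (integrable_psiIntegrand hb₀ hb₁ hK u)]
  refine integral_congr_ae (Eventually.of_forall fun s =>
    integral_congr_ae (Eventually.of_forall fun z => ?_))
  simp only [psiIntegrand, rate]
  ring_nf

end Kernel

theorem stmt1_general (d : ℕ) (a : ℝ) (ha : 0 < a) (had : a < 1 / d)
    (K : (Fin d → ℝ) → ℝ)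
    (hKbdd : ∃ M, ∀ z, |K z| ≤ M) (hKint : Integrable K)
    (hKone : (∫ z, K z) = 1)
    (hSneg : volume {x : Fin d → ℝ | K x < 0} = 0) :
    (∀ t : ℝ, t < 0 → Itrans d a K t = ⊤) ∧
    (Itrans d a K 0 = (((1 - a * d)⁻¹ : ℝ) : EReal) * ((volume {x : Fin d → ℝ | 0 < K x} : ℝ≥0∞) : EReal)) ∧
    StrictConvexOn ℝ (Ioi (0:ℝ)) (fun t => (Itrans d a K t).toReal) ∧
    ContinuousOn (fun t => (Itrans d a K t).toReal) (Ioi (0:ℝ)) ∧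
    (∀ t : ℝ, 0 < t → ∃ u : ℝ, deriv (psi d a K) u = t ∧
      Itrans d a K t = ((t * u - psi d a K u : ℝ) : EReal)) := by
  obtain ⟨M, hM⟩ := hKbdd
  have hK₀ : ∀ᵐ z, 0 ≤ K z := by rw [ae_iff]; simpa only [not_le] using hSneg
  obtain ⟨K', hK', hKK'⟩ := exists_isBoundedNonnegIntegrable_ae_eq hKint hM hK₀
  have hb₀ : 0 ≤ a * d := by positivity
  have hb₁ : a * d < 1 := by
    rcases Nat.eq_zero_or_pos d with rfl | hd
    · simp
    · exact (lt_div_iff₀ (by exact_mod_cast hd)).1 had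
  have hpos : volume {z | 0 < K' z} ≠ 0 :=
    measure_setOf_pos_ne_zero hK'.nonneg
      (by rw [← integral_congr_ae hKK', hKone]; exact one_ne_zero)
  have hψ : psi d a K = Psi volume (a * d) K' := (psi_congr_ae hKK').trans (psi_eq_Psi hb₀ hb₁ hK')
  have hI : Itrans d a K = legendre (Psi volume (a * d) K') := by rw [← hψ]; rfl
  have hderiv := hasDerivAt_Psi hb₀ hb₁ hK'
  have hmono := strictMono_dPsi hb₀ hb₁ hK' hpos
  have hsurj : Ioi 0 ⊆ range (dPsi volume (a * d) K') := fun t ht =>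
    exists_dPsi_eq hb₀ hb₁ hK' hpos ht
  have hconv := strictConvexOn_legendre hderiv hmono (convex_Ioi 0) hsurj
  have hS : {z | 0 < K z} =ᵐ[volume] {z | 0 < K' z} := hKK'.fun_comp (0 < ·)
  rw [hI, hψ, measure_congr hS]
  refine ⟨fun t ht => legendre_eq_top_of_neg (fun u hu => ?_) ht, legendre_Psi_zero hb₀ hb₁ hK',
    hconv, hconv.convexOn.continuousOn isOpen_Ioi, fun t ht => ?_⟩
  · exact (monotone_Psi hb₀ hb₁ hK' hu).trans_eq Psi_zero
  · obtain ⟨u, hu⟩ := hsurj ht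
    exact ⟨u, (hderiv u).deriv.trans hu, by rw [legendre_eq_of_deriv_eq hderiv hmono hu, mul_comm]⟩

/-- Proposition 1 (ii): under (H1) with `0 < a < 1/d`, if `λ(S₋) = 0` where
`S₋ = {x | K x < 0}`, then `I(t) = +∞` for `t < 0`, `I(0) = λ(S₊)/(1-ad)`,
`I` is strictly convex and continuous on `(0,∞)`, and for every `t > 0` one has
`I(t) = t (ψ')⁻¹(t) - ψ((ψ')⁻¹(t))` (i.e. there is `u` with `ψ'(u) = t` realizing this). -/
theorem stmt1 (d : ℕ) (hd : 0 < d) (a : ℝ) (ha : 0 < a) (had : a < 1 / d)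
    (K : (Fin d → ℝ) → ℝ)
    (hKbdd : ∃ M, ∀ z, |K z| ≤ M) (hKint : Integrable K)
    (hKone : (∫ z, K z) = 1)
    (hKvanish : Tendsto K (cocompact (Fin d → ℝ)) (𝓝 0))
    (hSneg : volume {x : Fin d → ℝ | K x < 0} = 0) :
    (∀ t : ℝ, t < 0 → Itrans d a K t = ⊤) ∧
    (Itrans d a K 0 = (((1 - a * d)⁻¹ : ℝ) : EReal) * ((volume {x : Fin d → ℝ | 0 < K x} : ℝ≥0∞) : EReal)) ∧
    StrictConvexOn ℝ (Ioi (0:ℝ)) (fun t => (Itrans d a K t).toReal) ∧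
    ContinuousOn (fun t => (Itrans d a K t).toReal) (Ioi (0:ℝ)) ∧
    (∀ t : ℝ, 0 < t → ∃ u : ℝ, deriv (psi d a K) u = t ∧
      Itrans d a K t = ((t * u - psi d a K u : ℝ) : EReal)) :=
  stmt1_general d a ha had K hKbdd hKint hKone hSneg
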